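/- Let X be a nonempty compact metric space and μ a finite Borel measure on X with full support (μ(U) > 0 for every nonempty open U ⊆ X). Let u, w : X → ℝ be continuous with min u = 0, max u = l > 0 and min w = 0. For t ∈ [0,1] set h_t := min(t·l, u) + w and g(t) := ∫_X normalize(h_t) dμ, and let t₀ ∈ [0,1] be the unique minimizer of g on [0,1]. Then argmin(h_{t₀}) = argmin(w) ∪ argmin(u+w), and for every t ∈ [0,1], argmin(h_t) ⊆ argmin(w) ∪ argmin(u+w). -/

import Mathlib

open MeasureTheory Set

/-- The (attained) minimum of `f` on a nonempty compact space. -/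
noncomputable def minF {X : Type*} (f : X → ℝ) : ℝ := sInf (Set.range f)

/-- The (attained) maximum of `f` on a nonempty compact space. -/
noncomputable def maxF {X : Type*} (f : X → ℝ) : ℝ := sSup (Set.range f)

/-- The oscillation `max f - min f`. -/
noncomputable def oscF {X : Type*} (f : X → ℝ) : ℝ := maxF f - minF f

/-- `normalize f = f - min f`. -/
noncomputable def normF {X : Type*} (f : X → ℝ) : X → ℝ := fun x => f x - minF f

/-- The minimizer set of `f`. -/
def argminF {X : Type*} (f : X → ℝ) : Set X := {x | f x = minF f}

/-- The maximizer set of `f`. -/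
def argmaxF {X : Type*} (f : X → ℝ) : Set X := {x | f x = maxF f}

/-!
Write `c = min (u + w)`. Since `w ≥ 0` vanishes somewhere, `min h_t = min (t l, c)`, and a
minimizer `x` of `h_t` minimizes `w` when `t l ≤ u x` and `u + w` when `u x ≤ t l`. After
normalization, `h_t - min h_t = min (t l, u) - min (t l, c) + w`, which dominates its value at
`t l = c` pointwise, strictly wherever `u` lies strictly on the same side of `c` as `t l`. That set
is open and nonempty (it contains a minimum or a maximum point of `u`), so full support makes
`t l = c` the only minimizing level, and at that level both argmin sets attain the value `c`.
-/

theorem le_minF {X : Type*} [Nonempty X] {f : X → ℝ} {a : ℝ} (h : ∀ x, a ≤ f x) : a ≤ minF f :=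
  le_csInf (range_nonempty f) (by rintro _ ⟨x, rfl⟩; exact h x)

section MinF

variable {X : Type*} [TopologicalSpace X] [CompactSpace X] {f : X → ℝ}

theorem minF_le (hf : Continuous f) (x : X) : minF f ≤ f x :=
  csInf_le (isCompact_range hf).bddBelow ⟨x, rfl⟩

theorem le_maxF (hf : Continuous f) (x : X) : f x ≤ maxF f :=
  le_csSup (isCompact_range hf).bddAbove ⟨x, rfl⟩

theorem mem_argminF_iff (hf : Continuous f) {x : X} : x ∈ argminF f ↔ ∀ y, f x ≤ f y :=
  ⟨fun hx y => hx.symm ▸ minF_le hf y, fun hx =>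
    (IsLeast.csInf_eq (s := range f) ⟨⟨x, rfl⟩, by rintro _ ⟨y, rfl⟩; exact hx y⟩).symm⟩

variable [Nonempty X]

theorem exists_eq_minF (hf : Continuous f) : ∃ x, f x = minF f := by
  obtain ⟨x, -, hx⟩ := isCompact_univ.exists_isMinOn univ_nonempty hf.continuousOn
  exact ⟨x, le_antisymm (le_minF fun y => hx (mem_univ y)) (minF_le hf x)⟩

theorem exists_eq_maxF (hf : Continuous f) : ∃ x, f x = maxF f := by
  obtain ⟨x, -, hx⟩ := isCompact_univ.exists_isMaxOn univ_nonempty hf.continuousOn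
  exact ⟨x, le_antisymm (le_maxF hf x)
    (csSup_le (range_nonempty f) (by rintro _ ⟨y, rfl⟩; exact hx (mem_univ y)))⟩

end MinF

theorem integral_lt_integral_of_continuous {X : Type*} [TopologicalSpace X] [CompactSpace X]
    [MeasurableSpace X] [OpensMeasurableSpace X] {μ : Measure X} [IsFiniteMeasure μ]
    [μ.IsOpenPosMeasure] {f g : X → ℝ} (hf : Continuous f) (hg : Continuous g) (hle : f ≤ g)
    {x : X} (hlt : f x < g x) : ∫ x, f x ∂μ < ∫ x, g x ∂μ := by
  have hint : ∀ {k : X → ℝ}, Continuous k → Integrable k μ :=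
    fun hk => hk.integrable_of_hasCompactSupport (.of_compactSpace _)
  rw [← sub_pos, ← integral_sub (hint hg) (hint hf)]
  exact integral_pos_of_integrable_nonneg_nonzero (hg.sub hf) (hint (hg.sub hf))
    (fun y => sub_nonneg.2 (hle y)) (sub_pos.2 hlt).ne'

theorem min_sub_min_le_min_sub_min (a c v : ℝ) : min c v - c ≤ min a v - min a c := by
  simp only [min_def]
  split_ifs <;> linarith

theorem min_sub_min_lt_min_sub_min {a c v : ℝ} (h : a < c ∧ v < c ∨ c < a ∧ c < v) :
    min c v - c < min a v - min a c := by
  simp only [min_def]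
  split_ifs <;> rcases h with ⟨_, _⟩ | ⟨_, _⟩ <;> linarith

section MinAdd

variable {X : Type*} [TopologicalSpace X] [CompactSpace X] {u w : X → ℝ}

theorem argminF_min_add_subset (hu : Continuous u) (hw : Continuous w) (a : ℝ) :
    argminF (fun x => min a (u x) + w x) ⊆ argminF w ∪ argminF (fun x => u x + w x) := by
  have huw : Continuous fun x => u x + w x := hu.add hw
  intro x hx
  rw [mem_argminF_iff (by fun_prop)] at hx
  rcases le_total a (u x) with h | h
  · refine .inl ((mem_argminF_iff hw).2 fun y => ?_)
    linarith [hx y, min_eq_left h, min_le_left a (u y)]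
  · refine .inr ((mem_argminF_iff huw).2 fun y => ?_)
    linarith [hx y, min_eq_right h, min_le_right a (u y)]

variable [Nonempty X]

theorem minF_min_add (hu : Continuous u) (hw : Continuous w) (hwmin : minF w = 0) (a : ℝ) :
    minF (fun x => min a (u x) + w x) = min a (minF fun x => u x + w x) := by
  have huw : Continuous fun x => u x + w x := hu.add hw
  have hcont : Continuous fun x => min a (u x) + w x := by fun_prop
  have hw0 (x : X) : 0 ≤ w x := hwmin ▸ minF_le hw x
  obtain ⟨x₀, hx₀⟩ := exists_eq_minF hw
  obtain ⟨x₁, hx₁⟩ := exists_eq_minF huw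
  refine le_antisymm (le_min ?_ ?_) (le_minF fun x => ?_)
  · linarith [minF_le hcont x₀, min_le_left a (u x₀)]
  · linarith [minF_le hcont x₁, min_le_right a (u x₁)]
  · rw [← min_add_add_right]
    exact min_le_min (le_add_of_nonneg_right (hw0 x)) (minF_le huw x)

theorem minF_add_mem_Icc (hu : Continuous u) (hw : Continuous w) (hwmin : minF w = 0) :
    minF (fun x => u x + w x) ∈ Icc (minF u) (maxF u) := by
  have huw : Continuous fun x => u x + w x := hu.add hw
  obtain ⟨x₀, hx₀⟩ := exists_eq_minF hw
  refine ⟨le_minF fun x => ?_, ?_⟩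
  · linarith [minF_le hu x, hwmin ▸ minF_le hw x]
  · linarith [minF_le huw x₀, le_maxF hu x₀]

theorem argminF_min_minF_add (hu : Continuous u) (hw : Continuous w) (hwmin : minF w = 0) :
    argminF (fun x => min (minF fun x => u x + w x) (u x) + w x) =
      argminF w ∪ argminF (fun x => u x + w x) := by
  set c := minF fun x => u x + w x
  refine (argminF_min_add_subset hu hw c).antisymm fun x hx => ?_
  have hmin : minF (fun x => min c (u x) + w x) = c := by
    rw [minF_min_add hu hw hwmin, min_self]
  have hcont : Continuous fun x => min c (u x) + w x := by fun_prop
  have hge : c ≤ min c (u x) + w x := hmin.symm.le.trans (minF_le hcont x)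
  show min c (u x) + w x = _
  rw [hmin]
  rcases hx with hx | hx
  · have hwx : w x = 0 := hx.trans hwmin
    linarith [min_le_left c (u x)]
  · have huwx : u x + w x = c := hx
    linarith [min_le_right c (u x)]

theorem integral_normF_min_add_lt [MeasurableSpace X] [OpensMeasurableSpace X] (μ : Measure X)
    [IsFiniteMeasure μ] [μ.IsOpenPosMeasure] (hu : Continuous u) (hw : Continuous w)
    (hwmin : minF w = 0) {a : ℝ} (ha : a ∈ Icc (minF u) (maxF u))
    (hac : a ≠ minF fun x => u x + w x) :
    ∫ x, normF (fun x => min (minF fun x => u x + w x) (u x) + w x) x ∂μ <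
      ∫ x, normF (fun x => min a (u x) + w x) x ∂μ := by
  set c := minF fun x => u x + w x
  have hnorm (b : ℝ) :
      normF (fun x => min b (u x) + w x) = fun x => min b (u x) - min b c + w x := by
    funext x
    simp only [normF, minF_min_add hu hw hwmin]
    ring
  simp only [hnorm, min_self]
  obtain ⟨x, hx⟩ : ∃ x, a < c ∧ u x < c ∨ c < a ∧ c < u x := by
    rcases hac.lt_or_gt with h | h
    · obtain ⟨x, hx⟩ := exists_eq_minF hu
      exact ⟨x, .inl ⟨h, hx ▸ ha.1.trans_lt h⟩⟩
    · obtain ⟨x, hx⟩ := exists_eq_maxF hu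
      exact ⟨x, .inr ⟨h, hx ▸ h.trans_le ha.2⟩⟩
  exact integral_lt_integral_of_continuous (by fun_prop) (by fun_prop)
    (fun y => add_le_add_left (min_sub_min_le_min_sub_min a c (u y)) _)
    (add_lt_add_left (min_sub_min_lt_min_sub_min hx) _)

end MinAdd

theorem stmt_14 {X : Type*} [MetricSpace X] [CompactSpace X] [Nonempty X]
    [MeasurableSpace X] [BorelSpace X]
    (μ : Measure X) [IsFiniteMeasure μ]
    (hfull : ∀ U : Set X, IsOpen U → U.Nonempty → 0 < μ U)
    (u w : X → ℝ) (hu : Continuous u) (hw : Continuous w)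
    (l : ℝ) (hl : 0 < l) (humin : minF u = 0) (humax : maxF u = l)
    (hwmin : minF w = 0)
    (t₀ : ℝ) (ht₀ : t₀ ∈ Set.Icc (0:ℝ) 1)
    (ht₀min : ∀ t ∈ Set.Icc (0:ℝ) 1,
      (∫ x, normF (fun x => min (t₀ * l) (u x) + w x) x ∂μ) ≤
        ∫ x, normF (fun x => min (t * l) (u x) + w x) x ∂μ) :
    argminF (fun x => min (t₀ * l) (u x) + w x) =
      argminF w ∪ argminF (fun x => u x + w x) ∧
    ∀ t ∈ Set.Icc (0:ℝ) 1,
      argminF (fun x => min (t * l) (u x) + w x) ⊆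
        argminF w ∪ argminF (fun x => u x + w x) := by
  have : μ.IsOpenPosMeasure := ⟨fun U hU hne => (hfull U hU hne).ne'⟩
  set c := minF fun x => u x + w x
  have hc : c ∈ Icc 0 l := by simpa only [humin, humax] using minF_add_mem_Icc hu hw hwmin
  have hkey : t₀ * l = c := by
    by_contra hne
    have hcl : c / l ∈ Icc (0 : ℝ) 1 := ⟨div_nonneg hc.1 hl.le, div_le_one_of_le₀ hc.2 hl.le⟩
    have hle := ht₀min (c / l) hcl
    rw [div_mul_cancel₀ c hl.ne'] at hle
    have ht₀l : t₀ * l ∈ Icc (minF u) (maxF u) := by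
      rw [humin, humax]
      exact ⟨mul_nonneg ht₀.1 hl.le, mul_le_of_le_one_left hl.le ht₀.2⟩
    exact hle.not_gt (integral_normF_min_add_lt μ hu hw hwmin ht₀l hne)
  rw [hkey]
  exact ⟨argminF_min_minF_add hu hw hwmin, fun t _ => argminF_min_add_subset hu hw _⟩
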